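/- arXiv:1407.3421 — 3 statements merged into one kernel-verified Lean document; each statement's English description precedes it below -/
import Mathlib

section
/- Let n be finite. Let A, B : ℝ → Matrix (Fin n) (Fin n) ℝ be continuous, Φ : ℝ × ℝ → Matrix (Fin n) (Fin n) ℝ the state transition matrix of dξ/dt = A(t)ξ (so ∂Φ(s,t)/∂s = A(s)Φ(s,t), Φ(t,t) = I, Φ(s,t)Φ(t,r) = Φ(s,r), Φ(s,t)⁻¹ = Φ(t,s)), and let P, P̂ be differentiable solutions of dP/dt = AP + PAᵀ + BBᵀ with P(0) = 0 and dP̂/dt = AP̂ + P̂Aᵀ − BBᵀ with P̂(1) = 0. Assume P̂(t) is invertible for t ∈ [0,1) and P(1) is invertible. Then Q(t) = P(t) − P(t)Φ(1,t)ᵀ P(1)⁻¹ Φ(1,t) P(t) satisfies, for all t ∈ [0,1), the differential Lyapunov equation dQ/dt = Â(t)Q(t) + Q(t)Â(t)ᵀ + B(t)B(t)ᵀ, where Â(t) = A(t) − B(t)B(t)ᵀ P̂(t)⁻¹, and Q(0) = 0. -/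
/-!
With `Π(t) = Φ(1,t)ᵀ P(1)⁻¹ Φ(1,t)` one has `Π' = -(AᵀΠ + ΠA)`, so `Q = P - PΠP` satisfies
`Q' = AQ + QAᵀ + BBᵀ - (BBᵀΠP + PΠBBᵀ)`. A solution of the homogeneous Lyapunov equation is
transported by the fundamental matrix, `X(t) = F(t) F(s)⁻¹ X(s) F(s)⁻ᵀ F(t)ᵀ`; hence `P` and `P̂`
are symmetric and `P + P̂ = Φ(t,1) P(1) Φ(t,1)ᵀ = Π⁻¹`. Then `P̂ΠP = (1 - PΠ)P = Q`, i.e.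
`P̂⁻¹Q = ΠP` and `QP̂⁻¹ = PΠ`, so the correction `BBᵀΠP + PΠBBᵀ` is `BBᵀP̂⁻¹Q + QP̂⁻ᵀBBᵀ`.
-/

open Matrix

-- Any norm would do: only the product topology on matrices enters the statements.
attribute [local instance] Matrix.linftyOpNormedAddCommGroup Matrix.linftyOpNormedSpace
  Matrix.linftyOpNormedRing Matrix.linftyOpNormedAlgebra

section Calculus

variable {𝕜 : Type*} [RCLike 𝕜] {t : 𝕜}

theorem Matrix.hasDerivAt_iff_entrywise {m n : Type*} [Fintype m] [Fintype n]
    {f : 𝕜 → Matrix m n 𝕜} {f' : Matrix m n 𝕜} :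
    HasDerivAt f f' t ↔ ∀ i j, HasDerivAt (fun s => f s i j) (f' i j) t :=
  hasDerivAt_iff_tendsto_slope.trans <| tendsto_pi_nhds.trans <| forall_congr' fun _ =>
    tendsto_pi_nhds.trans <| forall_congr' fun _ => hasDerivAt_iff_tendsto_slope.symm

theorem HasDerivAt.matrix_transpose {m n : Type*} [Fintype m] [Fintype n]
    {f : 𝕜 → Matrix m n 𝕜} {f' : Matrix m n 𝕜} (h : HasDerivAt f f' t) :
    HasDerivAt (fun s => (f s)ᵀ) f'ᵀ t :=
  hasDerivAt_iff_entrywise.2 fun i j => hasDerivAt_iff_entrywise.1 h j i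

variable {ι : Type*} [Fintype ι] [DecidableEq ι]

theorem HasDerivAt.matrix_inv {F : 𝕜 → Matrix ι ι 𝕜} {F' : Matrix ι ι 𝕜}
    (h : HasDerivAt F F' t) (ht : IsUnit (F t)) :
    HasDerivAt (fun s => (F s)⁻¹) (-((F t)⁻¹ * F' * (F t)⁻¹)) t := by
  obtain ⟨u, hu⟩ := ht
  have := (hu ▸ hasFDerivAt_ringInverse (𝕜 := 𝕜) u).comp_hasDerivAt t h
  simp only [Function.comp_def, ← nonsing_inv_eq_ringInverse, coe_units_inv, hu] at this
  exact this

theorem HasDerivAt.inv_fundamental {A F : 𝕜 → Matrix ι ι 𝕜}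
    (hF : HasDerivAt F (A t * F t) t) (hFu : IsUnit (F t)) :
    HasDerivAt (fun s => (F s)⁻¹) (-((F t)⁻¹ * A t)) t := by
  have hFF : F t * (F t)⁻¹ = 1 := mul_nonsing_inv _ ((isUnit_iff_isUnit_det _).1 hFu)
  exact (hF.matrix_inv hFu).congr_deriv <| by rw [mul_assoc, mul_assoc, hFF, mul_one]

theorem HasDerivAt.transpose_mul_mul {G : 𝕜 → Matrix ι ι 𝕜} {A M : Matrix ι ι 𝕜}
    (hG : HasDerivAt G (-(G t * A)) t) :
    HasDerivAt (fun s => (G s)ᵀ * M * G s)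
      (-(Aᵀ * ((G t)ᵀ * M * G t) + (G t)ᵀ * M * G t * A)) t :=
  ((hG.matrix_transpose.mul_const M).mul hG).congr_deriv <| by
    simp only [transpose_neg, transpose_mul]; noncomm_ring

theorem HasDerivAt.sub_mul_mul_of_lyapunov {P K : 𝕜 → Matrix ι ι 𝕜} {A S : Matrix ι ι 𝕜}
    (hP : HasDerivAt P (A * P t + P t * Aᵀ + S) t)
    (hK : HasDerivAt K (-(Aᵀ * K t + K t * A)) t) :
    HasDerivAt (fun s => P s - P s * K s * P s)
      (A * (P t - P t * K t * P t) + (P t - P t * K t * P t) * Aᵀ + S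
        - (S * K t * P t + P t * K t * S)) t :=
  (hP.sub ((hP.mul hK).mul hP)).congr_deriv <| by simp only [Pi.mul_apply]; noncomm_ring

end Calculus

section Lyapunov

variable {𝕜 : Type*} [RCLike 𝕜] {ι : Type*} [Fintype ι] [DecidableEq ι]
  {A F X C : 𝕜 → Matrix ι ι 𝕜}

theorem lyapunov_eq_conj (hF : ∀ t, HasDerivAt F (A t * F t) t) (hFu : ∀ t, IsUnit (F t))
    (hX : ∀ t, HasDerivAt X (A t * X t + X t * (A t)ᵀ) t) (t t₀ : 𝕜) :
    X t = F t * ((F t₀)⁻¹ * X t₀ * ((F t₀)⁻¹)ᵀ) * (F t)ᵀ := by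
  have hconst : ∀ t, HasDerivAt (fun s => (F s)⁻¹ * X s * ((F s)⁻¹)ᵀ) 0 t := fun t =>
    (((hF t).inv_fundamental (hFu t)).mul (hX t)).mul
      ((hF t).inv_fundamental (hFu t)).matrix_transpose |>.congr_deriv <| by
        simp only [Pi.mul_apply, transpose_neg, transpose_mul]; noncomm_ring
  rw [← is_const_of_deriv_eq_zero (fun t => (hconst t).differentiableAt)
    (fun t => (hconst t).deriv) t t₀]
  have hFF : F t * (F t)⁻¹ = 1 := mul_nonsing_inv _ ((isUnit_iff_isUnit_det _).1 (hFu t))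
  calc X t = (F t * (F t)⁻¹) * X t * (F t * (F t)⁻¹)ᵀ := by
        rw [hFF, transpose_one, one_mul, mul_one]
    _ = _ := by simp only [transpose_mul, mul_assoc]

theorem lyapunov_transpose_eq (hF : ∀ t, HasDerivAt F (A t * F t) t) (hFu : ∀ t, IsUnit (F t))
    (hX : ∀ t, HasDerivAt X (A t * X t + X t * (A t)ᵀ + C t) t) (hC : ∀ t, (C t)ᵀ = C t)
    {t₀ : 𝕜} (h : (X t₀)ᵀ = X t₀) (t : 𝕜) : (X t)ᵀ = X t := by
  have hZ : ∀ t, HasDerivAt (fun s => X s - (X s)ᵀ)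
      (A t * (X t - (X t)ᵀ) + (X t - (X t)ᵀ) * (A t)ᵀ) t := fun t =>
    ((hX t).sub (hX t).matrix_transpose).congr_deriv <| by
      simp only [transpose_add, transpose_mul, transpose_transpose, hC]; noncomm_ring
  have := lyapunov_eq_conj hF hFu hZ t t₀
  rw [h, sub_self, mul_zero, zero_mul, mul_zero, zero_mul, sub_eq_zero] at this
  exact this.symm

theorem lyapunov_add_eq_conj {P Q : 𝕜 → Matrix ι ι 𝕜} (hF : ∀ t, HasDerivAt F (A t * F t) t)
    (hFu : ∀ t, IsUnit (F t)) (hP : ∀ t, HasDerivAt P (A t * P t + P t * (A t)ᵀ + C t) t)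
    (hQ : ∀ t, HasDerivAt Q (A t * Q t + Q t * (A t)ᵀ - C t) t) {t₀ : 𝕜} (hF₀ : F t₀ = 1)
    (hQ₀ : Q t₀ = 0) (t : 𝕜) : P t + Q t = F t * P t₀ * (F t)ᵀ := by
  have hZ : ∀ t, HasDerivAt (fun s => P s + Q s)
      (A t * (P t + Q t) + (P t + Q t) * (A t)ᵀ) t := fun t =>
    ((hP t).add (hQ t)).congr_deriv <| by noncomm_ring
  rw [lyapunov_eq_conj hF hFu hZ t t₀, hF₀, hQ₀, inv_one, transpose_one, mul_one, one_mul,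
    add_zero]

end Lyapunov

section Algebra

variable {R ι : Type*} [CommRing R] [Fintype ι] [DecidableEq ι]

theorem Matrix.mul_mul_transpose_mul_inv_mul_eq_one {F G M : Matrix ι ι R} (hGF : G * F = 1)
    (hM : IsUnit M) : F * M * Fᵀ * (Gᵀ * M⁻¹ * G) = 1 := by
  calc _ = F * M * (G * F)ᵀ * M⁻¹ * G := by simp only [transpose_mul, mul_assoc]
    _ = 1 := by
      rw [hGF, transpose_one, mul_one,
        mul_nonsing_inv_cancel_right _ _ ((isUnit_iff_isUnit_det M).1 hM),
        mul_eq_one_comm.1 hGF]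

theorem closedLoop_lyapunov_eq {A S P Ph K : Matrix ι ι R} (hS : Sᵀ = S) (hPh : Phᵀ = Ph)
    (hPhu : IsUnit Ph) (hK : (P + Ph) * K = 1) :
    (A - S * Ph⁻¹) * (P - P * K * P) + (P - P * K * P) * (A - S * Ph⁻¹)ᵀ + S
      = A * (P - P * K * P) + (P - P * K * P) * Aᵀ + S - (S * K * P + P * K * S) := by
  have hdet := (isUnit_iff_isUnit_det Ph).1 hPhu
  have hPhK : P - P * K * P = Ph * (K * P) := by
    calc P - P * K * P = (1 - P * K) * P := by noncomm_ring
      _ = Ph * (K * P) := by rw [← hK]; noncomm_ring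
  have hKPh : P - P * K * P = P * K * Ph := by
    calc P - P * K * P = P * (1 - K * P) := by noncomm_ring
      _ = P * K * Ph := by rw [← mul_eq_one_comm.1 hK]; noncomm_ring
  have hl : Ph⁻¹ * (P - P * K * P) = K * P := by
    rw [hPhK, nonsing_inv_mul_cancel_left Ph _ hdet]
  have hr : (P - P * K * P) * Ph⁻¹ = P * K := by
    rw [hKPh, mul_nonsing_inv_cancel_right Ph _ hdet]
  rw [transpose_sub, transpose_mul, hS, transpose_nonsing_inv, hPh]
  calc _ = A * (P - P * K * P) + (P - P * K * P) * Aᵀ + S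
        - (S * (Ph⁻¹ * (P - P * K * P)) + (P - P * K * P) * Ph⁻¹ * S) := by noncomm_ring
    _ = _ := by rw [hl, hr]; noncomm_ring

end Algebra

theorem stmt_12_general (n : ℕ) (A B : ℝ → Matrix (Fin n) (Fin n) ℝ)
    (Φ : ℝ → ℝ → Matrix (Fin n) (Fin n) ℝ)
    (P Phat : ℝ → Matrix (Fin n) (Fin n) ℝ)
    (hΦd : ∀ t : ℝ, ∀ s : ℝ, ∀ i j : Fin n,
      HasDerivAt (fun s => Φ s t i j) ((A s * Φ s t) i j) s)
    (hΦid : ∀ t : ℝ, Φ t t = 1)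
    (hΦco : ∀ s t r : ℝ, Φ s t * Φ t r = Φ s r)
    (hP : ∀ t : ℝ, ∀ i j : Fin n,
      HasDerivAt (fun t => P t i j)
        ((A t * P t + P t * (A t)ᵀ + B t * (B t)ᵀ) i j) t)
    (hP0 : P 0 = 0)
    (hPhat : ∀ t : ℝ, ∀ i j : Fin n,
      HasDerivAt (fun t => Phat t i j)
        ((A t * Phat t + Phat t * (A t)ᵀ - B t * (B t)ᵀ) i j) t)
    (hPhat1 : Phat 1 = 0)
    (hPhatu : ∀ t ∈ Set.Ico (0 : ℝ) 1, IsUnit (Phat t))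
    (hP1 : IsUnit (P 1)) :
    (∀ t ∈ Set.Ico (0 : ℝ) 1, ∀ i j : Fin n,
      HasDerivAt
        (fun t => (P t - P t * (Φ 1 t)ᵀ * (P 1)⁻¹ * Φ 1 t * P t) i j)
        (((A t - B t * (B t)ᵀ * (Phat t)⁻¹)
            * (P t - P t * (Φ 1 t)ᵀ * (P 1)⁻¹ * Φ 1 t * P t)
          + (P t - P t * (Φ 1 t)ᵀ * (P 1)⁻¹ * Φ 1 t * P t)
            * (A t - B t * (B t)ᵀ * (Phat t)⁻¹)ᵀ
          + B t * (B t)ᵀ) i j) t) ∧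
    P 0 - P 0 * (Φ 1 0)ᵀ * (P 1)⁻¹ * Φ 1 0 * P 0 = 0 := by
  have hΦ1 : ∀ s, Φ 1 s * Φ s 1 = 1 := fun s => by rw [hΦco, hΦid]
  have hΦu : ∀ s, IsUnit (Φ s 1) := fun s => .of_mul_eq_one_right _ (hΦ1 s)
  have hF : ∀ s, HasDerivAt (Φ · 1) (A s * Φ s 1) s := fun s =>
    hasDerivAt_iff_entrywise.2 (hΦd 1 s)
  have hPd := fun t => hasDerivAt_iff_entrywise.2 (hP t)
  have hPhd := fun t => hasDerivAt_iff_entrywise.2 (hPhat t)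
  have hBB : ∀ t, (B t * (B t)ᵀ)ᵀ = B t * (B t)ᵀ := fun t => by
    rw [transpose_mul, transpose_transpose]
  have hPsymm := lyapunov_transpose_eq hF hΦu hPd hBB (by rw [hP0, transpose_zero])
  have hsum := lyapunov_add_eq_conj hF hΦu hPd hPhd (hΦid 1) hPhat1
  refine ⟨fun t ht => hasDerivAt_iff_entrywise.1 ?_, by simp [hP0]⟩
  have hPhsymm : (Phat t)ᵀ = Phat t := by
    rw [eq_sub_of_add_eq' (hsum t)]
    simp only [transpose_sub, transpose_mul, transpose_transpose, hPsymm, mul_assoc]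
  have hK : (P t + Phat t) * ((Φ 1 t)ᵀ * (P 1)⁻¹ * Φ 1 t) = 1 :=
    hsum t ▸ mul_mul_transpose_mul_inv_mul_eq_one (hΦ1 t) hP1
  have hG : HasDerivAt (Φ 1 ·) (-(Φ 1 t * A t)) t := by
    simpa only [fun s => inv_eq_left_inv (hΦ1 s)] using (hF t).inv_fundamental (hΦu t)
  have hQ := (hPd t).sub_mul_mul_of_lyapunov (hG.transpose_mul_mul (M := (P 1)⁻¹))
  rw [← closedLoop_lyapunov_eq (hBB t) hPhsymm (hPhatu t ht) hK] at hQ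
  simpa only [mul_assoc] using hQ

/-- Central identity of Proposition 1: the conditioned covariance
`Q(t) = P(t) − P(t)Φ(1,t)ᵀ P(1)⁻¹ Φ(1,t) P(t)` satisfies the closed-loop Lyapunov
equation `Q̇ = ÂQ + QÂᵀ + BBᵀ` with `Â = A − BBᵀP̂⁻¹`, and `Q(0) = 0`. -/
theorem stmt_12 (n : ℕ) (A B : ℝ → Matrix (Fin n) (Fin n) ℝ)
    (Φ : ℝ → ℝ → Matrix (Fin n) (Fin n) ℝ)
    (P Phat : ℝ → Matrix (Fin n) (Fin n) ℝ)
    (hA : Continuous A) (hB : Continuous B)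
    (hΦd : ∀ t : ℝ, ∀ s : ℝ, ∀ i j : Fin n,
      HasDerivAt (fun s => Φ s t i j) ((A s * Φ s t) i j) s)
    (hΦid : ∀ t : ℝ, Φ t t = 1)
    (hΦco : ∀ s t r : ℝ, Φ s t * Φ t r = Φ s r)
    (hΦinv : ∀ s t : ℝ, (Φ s t)⁻¹ = Φ t s)
    (hP : ∀ t : ℝ, ∀ i j : Fin n,
      HasDerivAt (fun t => P t i j)
        ((A t * P t + P t * (A t)ᵀ + B t * (B t)ᵀ) i j) t)
    (hP0 : P 0 = 0)
    (hPhat : ∀ t : ℝ, ∀ i j : Fin n,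
      HasDerivAt (fun t => Phat t i j)
        ((A t * Phat t + Phat t * (A t)ᵀ - B t * (B t)ᵀ) i j) t)
    (hPhat1 : Phat 1 = 0)
    (hPhatu : ∀ t ∈ Set.Ico (0 : ℝ) 1, IsUnit (Phat t))
    (hP1 : IsUnit (P 1)) :
    (∀ t ∈ Set.Ico (0 : ℝ) 1, ∀ i j : Fin n,
      HasDerivAt
        (fun t => (P t - P t * (Φ 1 t)ᵀ * (P 1)⁻¹ * Φ 1 t * P t) i j)
        (((A t - B t * (B t)ᵀ * (Phat t)⁻¹)
            * (P t - P t * (Φ 1 t)ᵀ * (P 1)⁻¹ * Φ 1 t * P t)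
          + (P t - P t * (Φ 1 t)ᵀ * (P 1)⁻¹ * Φ 1 t * P t)
            * (A t - B t * (B t)ᵀ * (Phat t)⁻¹)ᵀ
          + B t * (B t)ᵀ) i j) t) ∧
    P 0 - P 0 * (Φ 1 0)ᵀ * (P 1)⁻¹ * Φ 1 0 * P 0 = 0 :=
  stmt_12_general n A B Φ P Phat hΦd hΦid hΦco hP hP0 hPhat hPhat1 hPhatu hP1
end

section
/- Let n be finite and let Φ : ℝ × ℝ → Matrix (Fin n) (Fin n) ℝ satisfy Φ(t,t) = I, Φ(s,t)Φ(t,r) = Φ(s,r), and Φ(s,t)⁻¹ = Φ(t,s). Suppose T : ℝ → Matrix (Fin n) (Fin n) ℝ satisfies T(s) = Φ(s,0) T(0) Φ(s,0)ᵀ for all s, and T(1) is invertible. Then for all t, s: K(t,s) := Φ(1,t)ᵀ T(1)⁻¹ Φ(1,s) T(s) = Φ(s,t)ᵀ. -/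
/-!
Since `Φ` is a cocycle, the congruence `T(s) = Φ(s,0) T(0) Φ(s,0)ᵀ` can be
re-based at any time `r`, which gives `Φ(r,s) T(s) = T(r) Φ(s,r)ᵀ`. Taking `r = 1`,
the factor `T(1)` cancels against `T(1)⁻¹`, and the cocycle law turns
`Φ(1,t)ᵀ Φ(s,1)ᵀ` into `Φ(s,t)ᵀ`.
-/

open Matrix

section TransitionMatrix

variable {τ ι R : Type*} [Fintype ι] [CommRing R]
  {Φ : τ → τ → Matrix ι ι R} {T : τ → Matrix ι ι R}

theorem congr_transition_of_congr_transition_base (hΦco : ∀ s t r, Φ s t * Φ t r = Φ s r)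
    {t₀ : τ} (hT : ∀ s, T s = Φ s t₀ * T t₀ * (Φ s t₀)ᵀ) (s r : τ) :
    T s = Φ s r * T r * (Φ s r)ᵀ := by
  rw [hT s, hT r, ← hΦco s r t₀, transpose_mul]
  simp only [mul_assoc]

theorem transition_mul_eq_mul_transpose_transition [DecidableEq ι] (hΦid : ∀ t, Φ t t = 1)
    (hΦco : ∀ s t r, Φ s t * Φ t r = Φ s r) {t₀ : τ}
    (hT : ∀ s, T s = Φ s t₀ * T t₀ * (Φ s t₀)ᵀ) (r s : τ) :
    Φ r s * T s = T r * (Φ s r)ᵀ := by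
  rw [congr_transition_of_congr_transition_base hΦco hT s r, ← mul_assoc, ← mul_assoc, hΦco,
    hΦid, one_mul]

end TransitionMatrix

theorem stmt_13_general (n : ℕ) (Φ : ℝ → ℝ → Matrix (Fin n) (Fin n) ℝ)
    (T : ℝ → Matrix (Fin n) (Fin n) ℝ)
    (hΦid : ∀ t : ℝ, Φ t t = 1)
    (hΦco : ∀ s t r : ℝ, Φ s t * Φ t r = Φ s r)
    (hT : ∀ s : ℝ, T s = Φ s 0 * T 0 * (Φ s 0)ᵀ)
    (hT1 : IsUnit (T 1)) :
    ∀ t s : ℝ, (Φ 1 t)ᵀ * (T 1)⁻¹ * Φ 1 s * T s = (Φ s t)ᵀ := by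
  intro t s
  calc (Φ 1 t)ᵀ * (T 1)⁻¹ * Φ 1 s * T s
      = (Φ 1 t)ᵀ * ((T 1)⁻¹ * T 1) * (Φ s 1)ᵀ := by
        rw [mul_assoc _ (Φ 1 s), transition_mul_eq_mul_transpose_transition hΦid hΦco hT]
        simp only [mul_assoc]
    _ = (Φ s 1 * Φ 1 t)ᵀ := by
        rw [nonsing_inv_mul _ ((isUnit_iff_isUnit_det _).mp hT1), mul_one, transpose_mul]
    _ = (Φ s t)ᵀ := by rw [hΦco]

/-- If `Φ(s,t)` has the transition-matrix properties and
`T(s) = Φ(s,0) T(0) Φ(s,0)ᵀ` with `T(1)` invertible, then for all `t, s`,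
`K(t,s) = Φ(1,t)ᵀ T(1)⁻¹ Φ(1,s) T(s) = Φ(s,t)ᵀ`. -/
theorem stmt_13 (n : ℕ) (Φ : ℝ → ℝ → Matrix (Fin n) (Fin n) ℝ)
    (T : ℝ → Matrix (Fin n) (Fin n) ℝ)
    (hΦid : ∀ t : ℝ, Φ t t = 1)
    (hΦco : ∀ s t r : ℝ, Φ s t * Φ t r = Φ s r)
    (hΦinv : ∀ s t : ℝ, (Φ s t)⁻¹ = Φ t s)
    (hT : ∀ s : ℝ, T s = Φ s 0 * T 0 * (Φ s 0)ᵀ)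
    (hT1 : IsUnit (T 1)) :
    ∀ t s : ℝ, (Φ 1 t)ᵀ * (T 1)⁻¹ * Φ 1 s * T s = (Φ s t)ᵀ :=
  stmt_13_general n Φ T hΦid hΦco hT hT1
end

section
/- Let n be finite. Let A, B : ℝ → Matrix (Fin n) (Fin n) ℝ be continuous, Φ the state transition matrix of dξ/dt = A(t)ξ (with ∂Φ(s,t)/∂s = A(s)Φ(s,t), Φ(t,t) = I, Φ(s,t)Φ(t,r) = Φ(s,r), Φ(s,t)⁻¹ = Φ(t,s)), and let P, P̂ be differentiable solutions of dP/dt = AP + PAᵀ + BBᵀ with P(0) = 0 and dP̂/dt = AP̂ + P̂Aᵀ − BBᵀ with P̂(1) = 0. Assume P̂(s) is invertible for s ∈ [0,1) and P(1) is invertible. Fix t ∈ [0,1] and define, for s ∈ [t,1), Q(t,s) = P(t)Φ(s,t)ᵀ − P(t)Φ(1,t)ᵀ P(1)⁻¹ Φ(1,s) P(s). Then ∂Q(t,s)/∂s = Q(t,s) Â(s)ᵀ for all s ∈ [t,1), where Â(s) = A(s) − B(s)B(s)ᵀ P̂(s)⁻¹. -/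
/-
`P + P̂ᵀ` solves the homogeneous Lyapunov equation `X' = AX + XAᵀ`, so it is transported by the
state transition matrix: `P(s) + P̂(s)ᵀ = Φ(s,1) P(1) Φ(s,1)ᵀ` because `P̂(1) = 0`. Substituting
this into `Q` collapses it to `Q(t,s) = P(t) Φ(1,t)ᵀ P(1)⁻¹ Φ(1,s) P̂(s)ᵀ`. Differentiating with
`∂Φ(1,s)/∂s = -Φ(1,s) A(s)` and the equation of `P̂` leaves
`Q Aᵀ - P(t) Φ(1,t)ᵀ P(1)⁻¹ Φ(1,s) BBᵀ`, and the last term is `Q P̂⁻ᵀ BBᵀ`.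
-/

open Matrix

-- Any norm would do: the statement only involves entrywise derivatives.
attribute [local instance] Matrix.linftyOpNormedRing Matrix.linftyOpNormedAlgebra

theorem HasDerivAt.of_mul_eq_one {R : Type*} [NormedRing R] [HasSummableGeomSeries R]
    [NormedAlgebra ℝ R] {f g : ℝ → R} {f' : R} {x : ℝ} (hf : HasDerivAt f f' x)
    (hfg : ∀ y, f y * g y = 1) (hgf : ∀ y, g y * f y = 1) :
    HasDerivAt g (-(g x * f' * g x)) x := by
  have hg : Ring.inverse ∘ f = g := funext fun y =>
    Ring.inverse_unit ⟨f y, g y, hfg y, hgf y⟩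
  have hinv := hasFDerivAt_ringInverse (𝕜 := ℝ) ⟨f x, g x, hfg x, hgf x⟩
  simpa [hg] using hinv.comp_hasDerivAt x hf

variable {ι : Type*} [Fintype ι] [DecidableEq ι]

namespace Matrix

theorem hasDerivAt_iff_entries {f : ℝ → Matrix ι ι ℝ} {f' : Matrix ι ι ℝ} {x : ℝ} :
    HasDerivAt f f' x ↔ ∀ i j, HasDerivAt (fun y => f y i j) (f' i j) x := by
  refine ⟨fun h i j =>
    (entryLinearMap ℝ ℝ i j).toContinuousLinearMap.hasFDerivAt.comp_hasDerivAt x h, fun h => ?_⟩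
  have hsum := HasDerivAt.fun_sum fun i (_ : i ∈ Finset.univ) =>
    HasDerivAt.fun_sum fun j (_ : j ∈ Finset.univ) => (h i j).smul_const (single i j (1 : ℝ))
  simp only [smul_single, smul_eq_mul, mul_one, ← matrix_eq_sum_single] at hsum
  exact hsum

end Matrix

theorem HasDerivAt.matrix_transpose_s14 {f : ℝ → Matrix ι ι ℝ} {f' : Matrix ι ι ℝ} {x : ℝ}
    (h : HasDerivAt f f' x) : HasDerivAt (fun y => (f y)ᵀ) f'ᵀ x :=
  hasDerivAt_iff_entries.2 fun i j => hasDerivAt_iff_entries.1 h j i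

structure IsStateTransition (A : ℝ → Matrix ι ι ℝ) (Φ : ℝ → ℝ → Matrix ι ι ℝ) : Prop where
  hasDerivAt_left : ∀ t s, HasDerivAt (fun s => Φ s t) (A s * Φ s t) s
  self : ∀ t, Φ t t = 1
  mul : ∀ s t r, Φ s t * Φ t r = Φ s r

noncomputable def bridgeCrossCov (P : ℝ → Matrix ι ι ℝ) (Φ : ℝ → ℝ → Matrix ι ι ℝ) (t s : ℝ) :
    Matrix ι ι ℝ :=
  P t * (Φ s t)ᵀ - P t * (Φ 1 t)ᵀ * (P 1)⁻¹ * Φ 1 s * P s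

namespace IsStateTransition

variable {A : ℝ → Matrix ι ι ℝ} {Φ : ℝ → ℝ → Matrix ι ι ℝ}

theorem mul_swap (hΦ : IsStateTransition A Φ) (s t : ℝ) : Φ s t * Φ t s = 1 := by
  rw [hΦ.mul, hΦ.self]

theorem hasDerivAt_right (hΦ : IsStateTransition A Φ) (s t : ℝ) :
    HasDerivAt (fun t => Φ s t) (-(Φ s t * A t)) t := by
  have h := (hΦ.hasDerivAt_left s t).of_mul_eq_one (g := fun t => Φ s t)
    (fun r => hΦ.mul_swap r s) (fun r => hΦ.mul_swap s r)
  refine h.congr_deriv ?_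
  rw [mul_assoc, mul_assoc, hΦ.mul_swap, mul_one]

theorem eq_of_hasDerivAt_lyapunov (hΦ : IsStateTransition A Φ) {X : ℝ → Matrix ι ι ℝ}
    (hX : ∀ u, HasDerivAt X (A u * X u + X u * (A u)ᵀ) u) (u v : ℝ) :
    X u = Φ u v * X v * (Φ u v)ᵀ := by
  have hconj : ∀ w, HasDerivAt (fun w => Φ v w * X w * (Φ v w)ᵀ) 0 w := fun w =>
    (((hΦ.hasDerivAt_right v w).mul (hX w)).mul
      (hΦ.hasDerivAt_right v w).matrix_transpose_s14).congr_deriv (by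
        simp only [transpose_neg, transpose_mul, Pi.mul_apply]; noncomm_ring)
  have hconst := is_const_of_deriv_eq_zero (fun w => (hconj w).differentiableAt)
    (fun w => (hconj w).deriv) u v
  simp only [hΦ.self, transpose_one, mul_one, one_mul] at hconst
  rw [← hconst, ← mul_assoc, ← mul_assoc, hΦ.mul_swap, one_mul, mul_assoc, ← transpose_mul,
    hΦ.mul_swap, transpose_one, mul_one]

theorem hasDerivAt_mul_lyapunov (hΦ : IsStateTransition A Φ) {R : ℝ → Matrix ι ι ℝ}
    {G : Matrix ι ι ℝ} {s : ℝ} (hR : HasDerivAt R (A s * R s + R s * (A s)ᵀ - G) s) (c : ℝ) :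
    HasDerivAt (fun x => Φ c x * R x) (Φ c s * (R s * (A s)ᵀ - G)) s :=
  ((hΦ.hasDerivAt_right c s).mul hR).congr_deriv (by noncomm_ring)

theorem bridgeCrossCov_eq (hΦ : IsStateTransition A Φ) {P R : ℝ → Matrix ι ι ℝ} {s : ℝ}
    (hPR : P s + R s = Φ s 1 * P 1 * (Φ s 1)ᵀ) (hP1 : IsUnit (P 1)) (t : ℝ) :
    bridgeCrossCov P Φ t s = P t * (Φ 1 t)ᵀ * (P 1)⁻¹ * (Φ 1 s * R s) := by
  have hPs : P s = Φ s 1 * P 1 * (Φ s 1)ᵀ - R s := eq_sub_of_add_eq hPR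
  have hP1inv : (P 1)⁻¹ * P 1 = 1 := nonsing_inv_mul _ ((isUnit_iff_isUnit_det _).mp hP1)
  calc bridgeCrossCov P Φ t s
      = P t * (Φ s t)ᵀ - P t * (Φ 1 t)ᵀ * ((P 1)⁻¹ * (Φ 1 s * Φ s 1) * P 1) * (Φ s 1)ᵀ
          + P t * (Φ 1 t)ᵀ * (P 1)⁻¹ * (Φ 1 s * R s) := by
        rw [bridgeCrossCov, hPs]; noncomm_ring
    _ = P t * (Φ 1 t)ᵀ * (P 1)⁻¹ * (Φ 1 s * R s) := by
        rw [hΦ.mul_swap, mul_one, hP1inv, mul_one, mul_assoc, ← transpose_mul, hΦ.mul,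
          sub_self, zero_add]

theorem hasDerivAt_bridgeCrossCov (hΦ : IsStateTransition A Φ) {P R : ℝ → Matrix ι ι ℝ}
    {G : Matrix ι ι ℝ} {s : ℝ} (hPR : ∀ u, P u + R u = Φ u 1 * P 1 * (Φ u 1)ᵀ)
    (hP1 : IsUnit (P 1)) (hR : HasDerivAt R (A s * R s + R s * (A s)ᵀ - G) s)
    (hRs : IsUnit (R s)) (t : ℝ) :
    HasDerivAt (bridgeCrossCov P Φ t) (bridgeCrossCov P Φ t s * ((A s)ᵀ - (R s)⁻¹ * G)) s := by
  have hQ : bridgeCrossCov P Φ t = fun x => P t * (Φ 1 t)ᵀ * (P 1)⁻¹ * (Φ 1 x * R x) :=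
    funext fun x => hΦ.bridgeCrossCov_eq (hPR x) hP1 t
  have hRinv : R s * (R s)⁻¹ = 1 := mul_nonsing_inv _ ((isUnit_iff_isUnit_det _).mp hRs)
  rw [hQ]
  refine ((hΦ.hasDerivAt_mul_lyapunov hR 1).const_mul _).congr_deriv ?_
  have hcancel : R s * ((A s)ᵀ - (R s)⁻¹ * G) = R s * (A s)ᵀ - G := by
    rw [mul_sub, ← mul_assoc, hRinv, one_mul]
  simp only [mul_assoc]
  rw [hcancel]

end IsStateTransition

theorem stmt_14_general (n : ℕ) (A B : ℝ → Matrix (Fin n) (Fin n) ℝ)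
    (Φ : ℝ → ℝ → Matrix (Fin n) (Fin n) ℝ)
    (P Phat : ℝ → Matrix (Fin n) (Fin n) ℝ)
    (hΦd : ∀ t : ℝ, ∀ s : ℝ, ∀ i j : Fin n,
      HasDerivAt (fun s => Φ s t i j) ((A s * Φ s t) i j) s)
    (hΦid : ∀ t : ℝ, Φ t t = 1)
    (hΦco : ∀ s t r : ℝ, Φ s t * Φ t r = Φ s r)
    (hP : ∀ t : ℝ, ∀ i j : Fin n,
      HasDerivAt (fun t => P t i j)
        ((A t * P t + P t * (A t)ᵀ + B t * (B t)ᵀ) i j) t)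
    (hPhat : ∀ t : ℝ, ∀ i j : Fin n,
      HasDerivAt (fun t => Phat t i j)
        ((A t * Phat t + Phat t * (A t)ᵀ - B t * (B t)ᵀ) i j) t)
    (hPhat1 : Phat 1 = 0)
    (hPhatu : ∀ s ∈ Set.Ico (0 : ℝ) 1, IsUnit (Phat s))
    (hP1 : IsUnit (P 1))
    (t : ℝ) (ht : t ∈ Set.Icc (0 : ℝ) 1) :
    ∀ s ∈ Set.Ico t 1, ∀ i j : Fin n,
      HasDerivAt
        (fun s => (P t * (Φ s t)ᵀ - P t * (Φ 1 t)ᵀ * (P 1)⁻¹ * Φ 1 s * P s) i j)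
        (((P t * (Φ s t)ᵀ - P t * (Φ 1 t)ᵀ * (P 1)⁻¹ * Φ 1 s * P s)
            * (A s - B s * (B s)ᵀ * (Phat s)⁻¹)ᵀ) i j) s := by
  have hΦ : IsStateTransition A Φ :=
    ⟨fun t s => hasDerivAt_iff_entries.2 (hΦd t s), hΦid, hΦco⟩
  have hPM (u : ℝ) : HasDerivAt P (A u * P u + P u * (A u)ᵀ + B u * (B u)ᵀ) u :=
    hasDerivAt_iff_entries.2 (hP u)
  have hPhatT (u : ℝ) : HasDerivAt (fun x => (Phat x)ᵀ)
      (A u * (Phat u)ᵀ + (Phat u)ᵀ * (A u)ᵀ - B u * (B u)ᵀ) u :=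
    (hasDerivAt_iff_entries.2 (hPhat u)).matrix_transpose_s14.congr_deriv (by
      simp only [transpose_sub, transpose_add, transpose_mul, transpose_transpose]; abel)
  have hsum (u : ℝ) : P u + (Phat u)ᵀ = Φ u 1 * P 1 * (Φ u 1)ᵀ := by
    simpa [hPhat1] using hΦ.eq_of_hasDerivAt_lyapunov (X := fun x => P x + (Phat x)ᵀ)
      (fun u => ((hPM u).add (hPhatT u)).congr_deriv (by noncomm_ring)) u 1
  intro s hs
  have hPhats : IsUnit (Phat s)ᵀ := (isUnit_transpose _).2 (hPhatu s ⟨ht.1.trans hs.1, hs.2⟩)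
  have hÂ : (A s - B s * (B s)ᵀ * (Phat s)⁻¹)ᵀ = (A s)ᵀ - ((Phat s)ᵀ)⁻¹ * (B s * (B s)ᵀ) := by
    rw [transpose_sub, transpose_mul, transpose_mul, transpose_transpose, transpose_nonsing_inv]
  rw [hÂ]
  exact hasDerivAt_iff_entries.1 (hΦ.hasDerivAt_bridgeCrossCov hsum hP1 (hPhatT s) hPhats t)

/-- Cross-covariance identity of Proposition 1: for fixed `t ∈ [0,1]`, the bridge
cross-covariance `Q(t,s) = P(t)Φ(s,t)ᵀ − P(t)Φ(1,t)ᵀ P(1)⁻¹ Φ(1,s) P(s)` satisfies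
`∂Q(t,s)/∂s = Q(t,s) Â(s)ᵀ` for `s ∈ [t,1)`, where `Â = A − BBᵀP̂⁻¹`. -/
theorem stmt_14 (n : ℕ) (A B : ℝ → Matrix (Fin n) (Fin n) ℝ)
    (Φ : ℝ → ℝ → Matrix (Fin n) (Fin n) ℝ)
    (P Phat : ℝ → Matrix (Fin n) (Fin n) ℝ)
    (hA : Continuous A) (hB : Continuous B)
    (hΦd : ∀ t : ℝ, ∀ s : ℝ, ∀ i j : Fin n,
      HasDerivAt (fun s => Φ s t i j) ((A s * Φ s t) i j) s)
    (hΦid : ∀ t : ℝ, Φ t t = 1)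
    (hΦco : ∀ s t r : ℝ, Φ s t * Φ t r = Φ s r)
    (hΦinv : ∀ s t : ℝ, (Φ s t)⁻¹ = Φ t s)
    (hP : ∀ t : ℝ, ∀ i j : Fin n,
      HasDerivAt (fun t => P t i j)
        ((A t * P t + P t * (A t)ᵀ + B t * (B t)ᵀ) i j) t)
    (hP0 : P 0 = 0)
    (hPhat : ∀ t : ℝ, ∀ i j : Fin n,
      HasDerivAt (fun t => Phat t i j)
        ((A t * Phat t + Phat t * (A t)ᵀ - B t * (B t)ᵀ) i j) t)
    (hPhat1 : Phat 1 = 0)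
    (hPhatu : ∀ s ∈ Set.Ico (0 : ℝ) 1, IsUnit (Phat s))
    (hP1 : IsUnit (P 1))
    (t : ℝ) (ht : t ∈ Set.Icc (0 : ℝ) 1) :
    ∀ s ∈ Set.Ico t 1, ∀ i j : Fin n,
      HasDerivAt
        (fun s => (P t * (Φ s t)ᵀ - P t * (Φ 1 t)ᵀ * (P 1)⁻¹ * Φ 1 s * P s) i j)
        (((P t * (Φ s t)ᵀ - P t * (Φ 1 t)ᵀ * (P 1)⁻¹ * Φ 1 s * P s)
            * (A s - B s * (B s)ᵀ * (Phat s)⁻¹)ᵀ) i j) s :=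
  stmt_14_general n A B Φ P Phat hΦd hΦid hΦco hP hPhat hPhat1 hPhatu hP1 t ht
end
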